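/- Let B be a bialgebra and L: B⊗B → ℂ a normalized commuting 2-cocycle (generator of an additive deformation). Defining μ_t = μ⋆e_⋆^{tL} for all real t, the comultiplication Δ: (B, μ_{t+s}) → (B, μ_t)⊗(B, μ_s) is an algebra homomorphism: Δ∘μ_{t+s} = (μ_t⊗μ_s)∘(id⊗τ⊗id)∘(Δ⊗Δ) for all s,t ∈ ℝ. -/

import Mathlib

open TensorProduct Coalgebra

variable {B : Type} [Ring B] [Bialgebra ℂ B]

/-- The comultiplication `Λ = (id ⊗ τ ⊗ id) ∘ (Δ ⊗ Δ)` of `B ⊗ B`. -/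
noncomputable def Lam : B ⊗[ℂ] B →ₗ[ℂ] (B ⊗[ℂ] B) ⊗[ℂ] (B ⊗[ℂ] B) :=
  (TensorProduct.tensorTensorTensorComm ℂ B B B B).toLinearMap ∘ₗ
    TensorProduct.map (comul (R := ℂ)) (comul (R := ℂ))

/-- Convolution of linear functionals w.r.t. a given comultiplication. -/
noncomputable def convWith {M : Type} [AddCommGroup M] [Module ℂ M]
    (Δ : M →ₗ[ℂ] M ⊗[ℂ] M) (φ ψ : M →ₗ[ℂ] ℂ) : M →ₗ[ℂ] ℂ :=
  LinearMap.mul' ℂ ℂ ∘ₗ TensorProduct.map φ ψ ∘ₗ Δ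

/-- Convolution powers `φ^{⋆n}` w.r.t. a comultiplication `Δ` and counit `ε`. -/
noncomputable def convPowWith {M : Type} [AddCommGroup M] [Module ℂ M]
    (Δ : M →ₗ[ℂ] M ⊗[ℂ] M) (ε : M →ₗ[ℂ] ℂ) (φ : M →ₗ[ℂ] ℂ) : ℕ → (M →ₗ[ℂ] ℂ)
  | 0 => ε
  | n + 1 => convWith Δ φ (convPowWith Δ ε φ n)

/-- The counit `δ ⊗ δ` of `B ⊗ B`. -/
noncomputable def counit2 : B ⊗[ℂ] B →ₗ[ℂ] ℂ :=
  LinearMap.mul' ℂ ℂ ∘ₗ TensorProduct.map (counit (R := ℂ)) (counit (R := ℂ))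

/-- `L ⋆ μ = (L ⊗ μ) ∘ Λ : B ⊗ B → B`. -/
noncomputable def LconvMu (L : B ⊗[ℂ] B →ₗ[ℂ] ℂ) : B ⊗[ℂ] B →ₗ[ℂ] B :=
  (TensorProduct.lid ℂ B).toLinearMap ∘ₗ TensorProduct.map L (LinearMap.mul' ℂ B) ∘ₗ Lam

/-- `μ ⋆ L = (μ ⊗ L) ∘ Λ : B ⊗ B → B`. -/
noncomputable def MuConvL (L : B ⊗[ℂ] B →ₗ[ℂ] ℂ) : B ⊗[ℂ] B →ₗ[ℂ] B :=
  (TensorProduct.rid ℂ B).toLinearMap ∘ₗ TensorProduct.map (LinearMap.mul' ℂ B) L ∘ₗ Lam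

/-!
All maps live in convolution algebras of linear maps out of the coalgebra `B ⊗ B`. With
`η` the unit map, `μ_t = μ ⋆ η e^{tL}`, and the bialgebra axiom says `Δ ∘ μ = ι₁μ ⋆ ι₂μ`, while
`(f ⊗ g) ∘ Λ = ι₁f ⋆ ι₂g` for the two inclusions `ι₁, ι₂ : B → B ⊗ B`. The claim therefore reads
`ι₁μ ⋆ ι₂μ ⋆ η e^{(t+s)L} = ι₁μ ⋆ η e^{tL} ⋆ ι₂μ ⋆ η e^{sL}`, which follows from
`e^{(t+s)L} = e^{tL} ⋆ e^{sL}` and from `η e^{tL}` commuting with `μ`, inherited from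
`L ⋆ μ = μ ⋆ L`. Both are proved termwise on the exponential series. These converge absolutely:
`L^{⋆n}(x) = ε(Sⁿ x)` for the slice map `S = (L ⊗ id) ∘ Δ`, and `S` preserves the
finite-dimensional span of all slices of `x`, so `L^{⋆n}(x)` grows at most geometrically.
-/

open WithConv

namespace AlgHom

variable {R C T T' : Type*} [CommSemiring R] [AddCommMonoid C] [Module R C] [Coalgebra R C]
  [Semiring T] [Algebra R T] [Semiring T'] [Algebra R T']

noncomputable def compLeftConv (h : T →ₐ[R] T') :
    WithConv (C →ₗ[R] T) →+* WithConv (C →ₗ[R] T') where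
  toFun f := toConv (h.toLinearMap ∘ₗ f.ofConv)
  map_one' := by ext; simp
  map_mul' f g := by ext1; exact LinearMap.algHom_comp_convMul_distrib h f g
  map_zero' := by ext; simp
  map_add' f g := by ext; simp

@[simp] lemma compLeftConv_apply (h : T →ₐ[R] T') (f : WithConv (C →ₗ[R] T)) (x : C) :
    h.compLeftConv f x = h (f x) := rfl

lemma compLeftConv_ofId (h : T →ₐ[R] T') (φ : WithConv (C →ₗ[R] R)) :
    h.compLeftConv ((Algebra.ofId R T).compLeftConv φ) = (Algebra.ofId R T').compLeftConv φ := by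
  change (h.comp (Algebra.ofId R T)).compLeftConv φ = _
  rw [Subsingleton.elim (h.comp (Algebra.ofId R T)) (Algebra.ofId R T')]

end AlgHom

section ScalarConvolution

variable {R C T T' : Type*} [CommSemiring R] [AddCommMonoid C] [Module R C] [Coalgebra R C]
  [Semiring T] [Algebra R T] [Semiring T'] [Algebra R T']

open Algebra.TensorProduct in
lemma TensorProduct.map_comp_comul_eq_convMul (f : C →ₗ[R] T) (g : C →ₗ[R] T') :
    map f g ∘ₗ comul = ofConv ((includeLeft (S := R)).compLeftConv (toConv f) *
      includeRight.compLeftConv (toConv g)) := by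
  ext x
  rw [LinearMap.comp_apply, (ℛ R x).convMul_apply, ← (ℛ R x).eq]
  simp [map_sum]

lemma TensorProduct.rid_comp_map_comp_comul (f : C →ₗ[R] T) (φ : C →ₗ[R] R) :
    (TensorProduct.rid R T).toLinearMap ∘ₗ map f φ ∘ₗ comul =
      ofConv (toConv f * (Algebra.ofId R T).compLeftConv (toConv φ)) := by
  ext x
  rw [LinearMap.comp_apply, LinearMap.comp_apply, (ℛ R x).convMul_apply, ← (ℛ R x).eq]
  simp only [map_sum, map_tmul, LinearEquiv.coe_coe, rid_tmul, AlgHom.compLeftConv_apply,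
    Algebra.ofId_apply]
  exact Finset.sum_congr rfl fun i _ => by rw [_root_.Algebra.smul_def, Algebra.commutes]

lemma TensorProduct.lid_comp_map_comp_comul (φ : C →ₗ[R] R) (f : C →ₗ[R] T) :
    (TensorProduct.lid R T).toLinearMap ∘ₗ map φ f ∘ₗ comul =
      ofConv ((Algebra.ofId R T).compLeftConv (toConv φ) * toConv f) := by
  ext x
  rw [LinearMap.comp_apply, LinearMap.comp_apply, (ℛ R x).convMul_apply, ← (ℛ R x).eq]
  simp only [map_sum, map_tmul, LinearEquiv.coe_coe, lid_tmul, AlgHom.compLeftConv_apply,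
    Algebra.ofId_apply, _root_.Algebra.smul_def]

lemma LinearMap.comp_ofId_compLeftConv_convMul (F : T →ₗ[R] R) (α : WithConv (C →ₗ[R] R))
    (g : WithConv (C →ₗ[R] T)) :
    F ∘ₗ ((Algebra.ofId R T).compLeftConv α * g).ofConv =
      (α * toConv (F ∘ₗ g.ofConv)).ofConv := by
  ext x
  simp [(ℛ R x).convMul_apply, map_sum, ← _root_.Algebra.smul_def]

lemma LinearMap.comp_convMul_ofId_compLeftConv (F : T →ₗ[R] R) (α : WithConv (C →ₗ[R] R))
    (g : WithConv (C →ₗ[R] T)) :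
    F ∘ₗ (g * (Algebra.ofId R T).compLeftConv α).ofConv =
      (toConv (F ∘ₗ g.ofConv) * α).ofConv := by
  ext x
  simp [(ℛ R x).convMul_apply, map_sum, ← Algebra.commutes, ← _root_.Algebra.smul_def, mul_comm]

end ScalarConvolution

open Algebra.TensorProduct in
lemma Bialgebra.comulAlgHom_compLeftConv_mul' {R A : Type*} [CommSemiring R] [Semiring A]
    [Bialgebra R A] :
    (Bialgebra.comulAlgHom R A).compLeftConv (toConv (LinearMap.mul' R A)) =
      (includeLeft (S := R)).compLeftConv (toConv (LinearMap.mul' R A)) *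
        includeRight.compLeftConv (toConv (LinearMap.mul' R A)) := by
  ext1
  rw [← TensorProduct.map_comp_comul_eq_convMul]
  exact (Bialgebra.mulCoalgHom R A).map_comp_comul.symm

section GrowthBound

variable {𝕜 W E : Type*} [NontriviallyNormedField 𝕜] [CompleteSpace 𝕜] [AddCommGroup W]
  [Module 𝕜 W] [NormedAddCommGroup E] [NormedSpace 𝕜 E] [FiniteDimensional 𝕜 E]

lemma LinearMap.norm_pow_apply_le (U : E →ₗ[𝕜] E) (y : E) (n : ℕ) :
    ‖(U ^ n) y‖ ≤ ‖LinearMap.toContinuousLinearMap U‖ ^ n * ‖y‖ := by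
  induction n with
  | zero => simp
  | succ n ih =>
    rw [pow_succ', Module.End.mul_apply, pow_succ', mul_assoc]
    calc ‖U ((U ^ n) y)‖ = ‖LinearMap.toContinuousLinearMap U ((U ^ n) y)‖ := rfl
      _ ≤ _ := (ContinuousLinearMap.le_opNorm _ _).trans (by gcongr)

lemma LinearMap.exists_norm_apply_pow_apply_le_of_semiconj (f : W →ₗ[𝕜] 𝕜)
    (S : W →ₗ[𝕜] W) (P : E →ₗ[𝕜] W) (U : E →ₗ[𝕜] E) (hSP : S ∘ₗ P = P ∘ₗ U) (y : E) :
    ∃ c M : ℝ, ∀ n, ‖f ((S ^ n) (P y))‖ ≤ c * M ^ n := by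
  have hpow : ∀ n, (S ^ n) ∘ₗ P = P ∘ₗ U ^ n := by
    intro n
    induction n with
    | zero => rfl
    | succ n ih =>
      rw [pow_succ, Module.End.mul_eq_comp, LinearMap.comp_assoc, hSP, ← LinearMap.comp_assoc,
        ih, pow_succ, Module.End.mul_eq_comp, LinearMap.comp_assoc]
  set g := LinearMap.toContinuousLinearMap (f ∘ₗ P)
  refine ⟨‖g‖ * ‖y‖, ‖LinearMap.toContinuousLinearMap U‖, fun n => ?_⟩
  calc ‖f ((S ^ n) (P y))‖ = ‖g ((U ^ n) y)‖ := by
        rw [← LinearMap.comp_apply (S ^ n) P, hpow]; rfl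
    _ ≤ ‖g‖ * (‖LinearMap.toContinuousLinearMap U‖ ^ n * ‖y‖) :=
        (g.le_opNorm _).trans (by gcongr; exact U.norm_pow_apply_le y n)
    _ = _ := by ring

lemma LinearMap.exists_norm_apply_pow_apply_le (f : W →ₗ[𝕜] 𝕜) (S : W →ₗ[𝕜] W)
    {V : Submodule 𝕜 W} [FiniteDimensional 𝕜 V] (hV : ∀ v ∈ V, S v ∈ V) {x : W}
    (hx : x ∈ V) : ∃ c M : ℝ, ∀ n, ‖f ((S ^ n) x)‖ ≤ c * M ^ n := by
  set e := (Module.finBasis 𝕜 V).equivFun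
  simpa using f.exists_norm_apply_pow_apply_le_of_semiconj S (V.subtype ∘ₗ e.symm.toLinearMap)
    (e.toLinearMap ∘ₗ S.restrict hV ∘ₗ e.symm.toLinearMap) (by ext; simp) (e ⟨x, hx⟩)

end GrowthBound

namespace Coalgebra

section Slice

variable {R C : Type*} [CommSemiring R] [AddCommMonoid C] [Module R C] [Coalgebra R C]

noncomputable def leftSlice (φ : C →ₗ[R] R) : C →ₗ[R] C :=
  TensorProduct.lid R C ∘ₗ φ.rTensor C ∘ₗ comul

lemma Repr.leftSlice_apply {x : C} {ι : Type*} (𝓡 : Repr R x ι) (φ : C →ₗ[R] R) :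
    leftSlice φ x = ∑ i ∈ 𝓡.index, φ (𝓡.left i) • 𝓡.right i := by
  simp [leftSlice, ← 𝓡.eq, map_sum]

lemma convMul_apply_eq_apply_leftSlice (φ ψ : WithConv (C →ₗ[R] R)) (x : C) :
    (φ * ψ) x = ψ (leftSlice φ.ofConv x) := by
  simp [(ℛ R x).convMul_apply, (ℛ R x).leftSlice_apply, map_sum]

lemma leftSlice_one : leftSlice (1 : WithConv (C →ₗ[R] R)).ofConv = LinearMap.id := by
  ext x
  simp [leftSlice, LinearMap.convOne_def, rTensor_counit_comul]

lemma convPow_apply (φ : WithConv (C →ₗ[R] R)) (n : ℕ) (x : C) :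
    (φ ^ n) x = counit ((leftSlice φ.ofConv ^ n) x) := by
  induction n generalizing x with
  | zero => simp
  | succ n ih =>
    rw [pow_succ', convMul_apply_eq_apply_leftSlice, ih, pow_succ, Module.End.mul_apply]

end Slice

lemma leftSlice_convMul {R C : Type*} [CommRing R] [AddCommGroup C] [Module R C] [Coalgebra R C]
    [Module.Projective R C] (φ ψ : WithConv (C →ₗ[R] R)) :
    leftSlice (φ * ψ).ofConv = leftSlice ψ.ofConv ∘ₗ leftSlice φ.ofConv := by
  ext x
  rw [← sub_eq_zero, ← Module.forall_dual_apply_eq_zero_iff R]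
  intro χ
  rw [map_sub, sub_eq_zero, LinearMap.comp_apply]
  change (toConv χ) _ = (toConv χ) _
  rw [← convMul_apply_eq_apply_leftSlice, ← convMul_apply_eq_apply_leftSlice, mul_assoc,
    convMul_apply_eq_apply_leftSlice]

lemma exists_norm_convPow_apply_le {𝕜 C : Type*} [NontriviallyNormedField 𝕜]
    [CompleteSpace 𝕜] [AddCommGroup C] [Module 𝕜 C] [Coalgebra 𝕜 C]
    (φ : WithConv (C →ₗ[𝕜] 𝕜)) (x : C) : ∃ c M : ℝ, ∀ n, ‖(φ ^ n) x‖ ≤ c * M ^ n := by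
  classical
  set V := Submodule.span 𝕜 (Set.range fun ψ : C →ₗ[𝕜] 𝕜 => leftSlice ψ x)
  have : FiniteDimensional 𝕜 V := by
    refine Submodule.finiteDimensional_of_le (S₂ := Submodule.span 𝕜
      ((ℛ 𝕜 x).index.image (ℛ 𝕜 x).right : Set C)) (Submodule.span_le.mpr ?_)
    rintro _ ⟨ψ, rfl⟩
    dsimp only
    rw [(ℛ 𝕜 x).leftSlice_apply]
    exact Submodule.sum_mem _ fun i hi =>
      Submodule.smul_mem _ _ (Submodule.subset_span (Finset.mem_image_of_mem _ hi))
  have hx : x ∈ V :=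
    Submodule.subset_span ⟨(1 : WithConv (C →ₗ[𝕜] 𝕜)).ofConv, by simp [leftSlice_one]⟩
  have hV : ∀ v ∈ V, leftSlice φ.ofConv v ∈ V := by
    intro v hv
    refine (Submodule.map_span_le _ _ V).mpr ?_ ⟨v, hv, rfl⟩
    rintro _ ⟨ψ, rfl⟩
    exact Submodule.subset_span ⟨(toConv ψ * φ).ofConv, by simp [leftSlice_convMul]⟩
  simp_rw [convPow_apply]
  exact counit.exists_norm_apply_pow_apply_le _ hV hx

end Coalgebra

section SeriesConvMul

variable {R C : Type*} [CommSemiring R] [TopologicalSpace R] [IsTopologicalSemiring R]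
  [AddCommMonoid C] [Module R C] [Coalgebra R C]
  {a : ℕ → WithConv (C →ₗ[R] R)} {α : WithConv (C →ₗ[R] R)}

lemma hasSum_convMul_apply_left (ha : ∀ y, HasSum (fun n => a n y) (α y))
    (ψ : WithConv (C →ₗ[R] R)) (x : C) : HasSum (fun n => (a n * ψ) x) ((α * ψ) x) := by
  simp only [(ℛ R x).convMul_apply]
  exact hasSum_sum fun i _ => (ha _).mul_right _

lemma hasSum_convMul_apply_right (ha : ∀ y, HasSum (fun n => a n y) (α y))
    (ψ : WithConv (C →ₗ[R] R)) (x : C) : HasSum (fun n => (ψ * a n) x) ((ψ * α) x) := by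
  simp only [(ℛ R x).convMul_apply]
  exact hasSum_sum fun i _ => (ha _).mul_left _

end SeriesConvMul

open Finset.HasAntidiagonal in
lemma hasSum_convMul_apply_antidiagonal {R C : Type*} [NormedCommRing R] [CompleteSpace R]
    [AddCommMonoid C] [Module R C] [Coalgebra R C] {a b : ℕ → WithConv (C →ₗ[R] R)}
    {α β : WithConv (C →ₗ[R] R)} (ha : ∀ y, Summable fun n => ‖a n y‖)
    (hb : ∀ y, Summable fun n => ‖b n y‖) (hα : ∀ y, HasSum (fun n => a n y) (α y))
    (hβ : ∀ y, HasSum (fun n => b n y) (β y)) (x : C) :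
    HasSum (fun N => (∑ kl ∈ antidiagonal N, a kl.1 * b kl.2) x) ((α * β) x) := by
  simp only [WithConv.ofConv_sum, LinearMap.coe_sum, Finset.sum_apply, (ℛ R x).convMul_apply]
  simp_rw [Finset.sum_comm (s := antidiagonal _)]
  refine hasSum_sum fun i _ => ?_
  rw [← (hα _).tsum_eq, ← (hβ _).tsum_eq,
    tsum_mul_tsum_eq_tsum_sum_antidiagonal_of_summable_norm (ha _) (hb _)]
  exact (summable_norm_sum_mul_antidiagonal_of_summable_norm (ha _) (hb _)).of_norm.hasSum

open Finset.HasAntidiagonal in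
lemma add_pow_div_factorial {K : Type*} [Field K] [CharZero K] (t s : K) (N : ℕ) :
    (t + s) ^ N / N.factorial =
      ∑ kl ∈ antidiagonal N, t ^ kl.1 / kl.1.factorial * (s ^ kl.2 / kl.2.factorial) := by
  rw [(Commute.all t s).add_pow', Finset.sum_div]
  refine Finset.sum_congr rfl fun kl hkl => ?_
  rw [← mem_antidiagonal.mp hkl, nsmul_eq_mul, Nat.cast_add_choose]
  field_simp [Nat.factorial_ne_zero]

section ConvExp

open Finset.HasAntidiagonal

variable {𝕜 C : Type*} [RCLike 𝕜] [AddCommGroup C] [Module 𝕜 C] [Coalgebra 𝕜 C]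

noncomputable def convExpSeries (φ : WithConv (C →ₗ[𝕜] 𝕜)) (t : 𝕜) (n : ℕ) :
    WithConv (C →ₗ[𝕜] 𝕜) :=
  (t ^ n / n.factorial) • φ ^ n

def IsConvExp (φ : WithConv (C →ₗ[𝕜] 𝕜)) (t : 𝕜) (e : WithConv (C →ₗ[𝕜] 𝕜)) : Prop :=
  ∀ x, HasSum (fun n => convExpSeries φ t n x) (e x)

variable {φ e e₁ e₂ : WithConv (C →ₗ[𝕜] 𝕜)} {t s : 𝕜}

lemma summable_norm_convExpSeries_apply (φ : WithConv (C →ₗ[𝕜] 𝕜)) (t : 𝕜) (x : C) :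
    Summable fun n => ‖convExpSeries φ t n x‖ := by
  obtain ⟨c, M, h⟩ := Coalgebra.exists_norm_convPow_apply_le φ x
  refine .of_nonneg_of_le (fun _ => norm_nonneg _) (fun n => ?_)
    ((Real.summable_pow_div_factorial (‖t‖ * M)).mul_left c)
  calc ‖convExpSeries φ t n x‖ = ‖t‖ ^ n / n.factorial * ‖(φ ^ n) x‖ := by
        simp [convExpSeries, norm_mul, norm_div, norm_pow]
    _ ≤ ‖t‖ ^ n / n.factorial * (c * M ^ n) := by gcongr; exact h n
    _ = c * ((‖t‖ * M) ^ n / n.factorial) := by ring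

lemma isConvExp_of_tsum (h : ∀ x, e x = ∑' n, convExpSeries φ t n x) : IsConvExp φ t e :=
  fun x => h x ▸ (summable_norm_convExpSeries_apply φ t x).of_norm.hasSum

lemma sum_antidiagonal_convExpSeries_mul (φ : WithConv (C →ₗ[𝕜] 𝕜)) (t s : 𝕜) (N : ℕ) :
    ∑ kl ∈ antidiagonal N, convExpSeries φ t kl.1 * convExpSeries φ s kl.2 =
      convExpSeries φ (t + s) N := by
  rw [convExpSeries, add_pow_div_factorial, Finset.sum_smul]
  refine Finset.sum_congr rfl fun kl hkl => ?_
  rw [convExpSeries, convExpSeries, smul_mul_smul_comm, ← pow_add, mem_antidiagonal.mp hkl]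

lemma IsConvExp.eq_convMul (h₁ : IsConvExp φ t e₁) (h₂ : IsConvExp φ s e₂)
    (h : IsConvExp φ (t + s) e) : e = e₁ * e₂ := by
  ext x
  have := hasSum_convMul_apply_antidiagonal (summable_norm_convExpSeries_apply φ t)
    (summable_norm_convExpSeries_apply φ s) h₁ h₂ x
  simp_rw [sum_antidiagonal_convExpSeries_mul] at this
  exact (h x).unique this

lemma IsConvExp.commute (he : IsConvExp φ t e) {ψ : WithConv (C →ₗ[𝕜] 𝕜)}
    (hψ : Commute φ ψ) : Commute e ψ := by
  ext x
  have hterm : ∀ n, convExpSeries φ t n * ψ = ψ * convExpSeries φ t n :=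
    fun n => ((hψ.pow_left n).smul_left _).eq
  refine (hasSum_convMul_apply_left he ψ x).unique ?_
  simp_rw [hterm]
  exact hasSum_convMul_apply_right he ψ x

/-- Tested against a functional `F` on `T`, this is `IsConvExp.commute` for `F ∘ g`. -/
lemma IsConvExp.commute_ofId_compLeftConv {T : Type*} [Ring T] [Algebra 𝕜 T]
    (he : IsConvExp φ t e) {g : WithConv (C →ₗ[𝕜] T)}
    (hg : Commute ((Algebra.ofId 𝕜 T).compLeftConv φ) g) :
    Commute ((Algebra.ofId 𝕜 T).compLeftConv e) g := by
  ext x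
  rw [← sub_eq_zero, ← Module.forall_dual_apply_eq_zero_iff 𝕜]
  intro F
  have hF : Commute φ (toConv (F ∘ₗ g.ofConv)) := by
    have := congrArg (fun f => F ∘ₗ f.ofConv) hg.eq
    simp only [LinearMap.comp_ofId_compLeftConv_convMul,
      LinearMap.comp_convMul_ofId_compLeftConv] at this
    exact WithConv.ext this
  have := LinearMap.congr_fun (congrArg ofConv (he.commute hF).eq) x
  rw [map_sub, sub_eq_zero]
  simpa only [← LinearMap.comp_apply, LinearMap.comp_ofId_compLeftConv_convMul,
    LinearMap.comp_convMul_ofId_compLeftConv] using this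

end ConvExp

lemma convPowWith_eq_pow (L : B ⊗[ℂ] B →ₗ[ℂ] ℂ) (n : ℕ) :
    convPowWith Lam counit2 L n = ((toConv L) ^ n).ofConv := by
  induction n with
  | zero => ext a b; simp [convPowWith, counit2, LinearMap.convOne_def, mul_comm]
  | succ n ih => rw [pow_succ', convPowWith, ih]; rfl

theorem stmt9_general (L : B ⊗[ℂ] B →ₗ[ℂ] ℂ)
    (hcomm : LconvMu L = MuConvL L)
    (EL : ℝ → (B ⊗[ℂ] B →ₗ[ℂ] ℂ))
    (hEL : ∀ t x, EL t x = ∑' n : ℕ,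
      ((t : ℂ) ^ n / n.factorial) * convPowWith Lam counit2 L n x)
    (μt : ℝ → (B ⊗[ℂ] B →ₗ[ℂ] B))
    (hμt : ∀ t, μt t = (TensorProduct.rid ℂ B).toLinearMap ∘ₗ
      TensorProduct.map (LinearMap.mul' ℂ B) (EL t) ∘ₗ Lam) :
    ∀ s t : ℝ,
      comul (R := ℂ) ∘ₗ μt (t + s)
        = TensorProduct.map (μt t) (μt s) ∘ₗ Lam := by
  intro s t
  set μ : WithConv (B ⊗[ℂ] B →ₗ[ℂ] B) := toConv (LinearMap.mul' ℂ B)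
  set η := (Algebra.ofId ℂ B).compLeftConv (C := B ⊗[ℂ] B)
  set E : ℝ → WithConv (B ⊗[ℂ] B →ₗ[ℂ] ℂ) := fun r => toConv (EL r)
  have hexp (r : ℝ) : IsConvExp (toConv L) r (E r) :=
    isConvExp_of_tsum fun x => by simp [E, hEL, convExpSeries, convPowWith_eq_pow]
  have hμ (r : ℝ) : μt r = (μ * η (E r)).ofConv := by
    rw [hμt]; exact TensorProduct.rid_comp_map_comp_comul _ _
  have hLμ : Commute (η (toConv L)) μ := by
    refine WithConv.ext ?_
    rw [← TensorProduct.lid_comp_map_comp_comul, ← TensorProduct.rid_comp_map_comp_comul]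
    exact hcomm
  have hadd : E (t + s) = E t * E s :=
    (hexp t).eq_convMul (hexp s) (by simpa using hexp (t + s))
  have hμE : Commute (Algebra.TensorProduct.includeRight.compLeftConv μ)
      ((Algebra.ofId ℂ (B ⊗[ℂ] B)).compLeftConv (E t)) := by
    rw [← AlgHom.compLeftConv_ofId Algebra.TensorProduct.includeRight]
    exact ((hexp t).commute_ofId_compLeftConv hLμ).symm.map _
  rw [hμ, hμ, hμ, show (Lam : B ⊗[ℂ] B →ₗ[ℂ] _) = comul from rfl,
    TensorProduct.map_comp_comul_eq_convMul, toConv_ofConv, toConv_ofConv]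
  change ((Bialgebra.comulAlgHom ℂ B).compLeftConv (μ * η (E (t + s)))).ofConv = _
  simp only [η, map_mul, hadd, AlgHom.compLeftConv_ofId]
  rw [Bialgebra.comulAlgHom_compLeftConv_mul', mul_assoc,
    ← mul_assoc (Algebra.TensorProduct.includeRight.compLeftConv μ), hμE.eq, mul_assoc, mul_assoc]

/-- Let `L` be a normalized commuting Hochschild 2-cocycle on the bialgebra `B`, and let
`μ_t = μ ⋆ e_⋆^{tL}` (for all real `t`), the convolution exponential being encoded as a
family `EL` of linear maps whose values are the pointwise-convergent exponential series.
Then `Δ : (B, μ_{t+s}) → (B, μ_t) ⊗ (B, μ_s)` is an algebra homomorphism: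
`Δ ∘ μ_{t+s} = (μ_t ⊗ μ_s) ∘ (id ⊗ τ ⊗ id) ∘ (Δ ⊗ Δ)` for all `s, t ∈ ℝ`. -/
theorem stmt9 (L : B ⊗[ℂ] B →ₗ[ℂ] ℂ)
    (hnorm : L (1 ⊗ₜ[ℂ] 1) = 0)
    (hcomm : LconvMu L = MuConvL L)
    (hcocycle : ∀ a b c : B,
      counit (R := ℂ) a * L (b ⊗ₜ[ℂ] c) - L ((a * b) ⊗ₜ[ℂ] c)
        + L (a ⊗ₜ[ℂ] (b * c)) - L (a ⊗ₜ[ℂ] b) * counit (R := ℂ) c = 0)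
    (EL : ℝ → (B ⊗[ℂ] B →ₗ[ℂ] ℂ))
    (hEL : ∀ t x, EL t x = ∑' n : ℕ,
      ((t : ℂ) ^ n / n.factorial) * convPowWith Lam counit2 L n x)
    (μt : ℝ → (B ⊗[ℂ] B →ₗ[ℂ] B))
    (hμt : ∀ t, μt t = (TensorProduct.rid ℂ B).toLinearMap ∘ₗ
      TensorProduct.map (LinearMap.mul' ℂ B) (EL t) ∘ₗ Lam) :
    ∀ s t : ℝ,
      comul (R := ℂ) ∘ₗ μt (t + s)
        = TensorProduct.map (μt t) (μt s) ∘ₗ Lam :=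
  stmt9_general L hcomm EL hEL μt hμt
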